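/- For any density operator ρ_{AB} on ℂ^d ⊗ ℂ^d, the trace distance between its marginals satisfies D(ρ_A, ρ_B) ≤ 2√(Tr(P_as ρ_{AB}) · Tr(P_s ρ_{AB})). -/

import Mathlib

open scoped Matrix Kronecker ComplexOrder

noncomputable section

namespace QEMD

variable {m n : Type*} [Fintype m] [Fintype n] [DecidableEq m] [DecidableEq n]

/-- Total square root: the PSD square root if `A` is PSD, else `0`. -/
def msqrt (A : Matrix n n ℂ) : Matrix n n ℂ :=
  letI := Classical.dec A.PosSemidef
  if h : A.PosSemidef then
    h.1.eigenvectorUnitary.1 * Matrix.diagonal ((↑) ∘ (√·) ∘ h.1.eigenvalues) *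
      (star h.1.eigenvectorUnitary : Matrix n n ℂ)
  else 0

/-- Trace norm `‖A‖₁ = Tr √(AᴴA)`. -/
def traceNorm (A : Matrix n n ℂ) : ℝ :=
  ((msqrt (Aᴴ * A)).trace).re

/-- Trace distance `D(ρ,σ) = ½‖ρ-σ‖₁`. -/
def traceDist (ρ σ : Matrix n n ℂ) : ℝ := traceNorm (ρ - σ) / 2

/-- Fidelity `F(ρ,σ) = Tr √(√ρ σ √ρ)`. -/
def fidelity (ρ σ : Matrix n n ℂ) : ℝ :=
  ((msqrt (msqrt ρ * σ * msqrt ρ)).trace).re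

/-- Density matrix predicate. -/
def IsDensity (ρ : Matrix n n ℂ) : Prop := ρ.PosSemidef ∧ ρ.trace = 1

/-- Projector `|v⟩⟨v|` onto a vector. -/
def proj (v : n → ℂ) : Matrix n n ℂ := Matrix.of fun i j => v i * star (v j)

/-- Partial trace over the first (left) factor. -/
def traceLeft (ρ : Matrix (m × n) (m × n) ℂ) : Matrix n n ℂ :=
  Matrix.of fun i j => ∑ k, ρ (k, i) (k, j)

/-- Partial trace over the second (right) factor. -/
def traceRight (ρ : Matrix (m × n) (m × n) ℂ) : Matrix m m ℂ :=
  Matrix.of fun i j => ∑ k, ρ (i, k) (j, k)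

/-- The swap operator `S|αβ⟩ = |βα⟩` on `ℂ^d ⊗ ℂ^d`. -/
def swap (d : ℕ) : Matrix (Fin d × Fin d) (Fin d × Fin d) ℂ :=
  Matrix.of fun p q => if p.1 = q.2 ∧ p.2 = q.1 then 1 else 0

/-- Projection onto the symmetric subspace, `P_s = (I + S)/2`. -/
def Psym (d : ℕ) : Matrix (Fin d × Fin d) (Fin d × Fin d) ℂ := (2:ℂ)⁻¹ • (1 + swap d)

/-- Projection onto the antisymmetric subspace, `P_as = (I - S)/2`. -/
def Pasym (d : ℕ) : Matrix (Fin d × Fin d) (Fin d × Fin d) ℂ := (2:ℂ)⁻¹ • (1 - swap d)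

/-- `ρAB` is a quantum coupling of `ρA` and `ρB`. -/
def IsCoupling (ρAB : Matrix (m × n) (m × n) ℂ) (ρA : Matrix m m ℂ)
    (ρB : Matrix n n ℂ) : Prop :=
  IsDensity ρAB ∧ traceRight ρAB = ρA ∧ traceLeft ρAB = ρB

/-- The maximally entangled vector `|Φ⟩ = (1/√d) ∑ᵢ |i⟩|i⟩`. -/
def maxEnt (d : ℕ) : Fin d × Fin d → ℂ :=
  fun p => if p.1 = p.2 then ((1 / Real.sqrt d : ℝ) : ℂ) else 0

/-!
Let `U` be the sign of the Hermitian matrix `ρ_A - ρ_B`, so that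
`2 D(ρ_A, ρ_B) = Tr (U (ρ_A - ρ_B)) = Tr (M ρ)` with `M = U ⊗ 1 - 1 ⊗ U`.
Conjugation by the swap negates `M`, so `M = P_s M P_as + P_as M P_s` and
`Tr (M ρ) = 2 Re Tr (P_as M P_s ρ)`. Writing `ρ = C Cᴴ`, Cauchy–Schwarz for the
Hilbert–Schmidt inner product together with `Mᴴ M ≤ 4` (since `4 - M² = (1 + U ⊗ U)²`)
gives `|Tr (P_as M P_s ρ)|² ≤ 4 Tr (P_as ρ) Tr (P_s ρ)`.
-/

open scoped MatrixOrder

section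
variable {ι : Type*} [Fintype ι]

lemma msqrt_eq_sqrt [DecidableEq ι] {A : Matrix ι ι ℂ} (h : A.PosSemidef) :
    msqrt A = CFC.sqrt A := by
  rw [msqrt, dif_pos h, CFC.sqrt_eq_cfc, cfc_nnreal_eq_real _ A, h.1.cfc_eq,
    Matrix.IsHermitian.cfc, Unitary.conjStarAlgAut_apply]
  congr 3
  funext i
  simp [h.eigenvalues_nonneg i]

lemma exists_traceNorm_eq_re_trace_mul [DecidableEq ι] {Δ : Matrix ι ι ℂ}
    (hΔ : Δ.IsHermitian) :
    ∃ U : Matrix ι ι ℂ, U.IsHermitian ∧ U * U = 1 ∧ traceNorm Δ = (U * Δ).trace.re := by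
  have hΔ' : IsSelfAdjoint Δ := hΔ
  have hcont (f : ℝ → ℝ) : ContinuousOn f (spectrum ℝ Δ) :=
    Δ.finite_real_spectrum.continuousOn f
  let sgn : ℝ → ℝ := fun x => if 0 ≤ x then 1 else -1
  have habs : cfc sgn Δ * Δ = msqrt (Δᴴ * Δ) := by
    rw [msqrt_eq_sqrt (Matrix.posSemidef_conjTranspose_mul_self Δ),
      ← Matrix.star_eq_conjTranspose, ← CFC.abs, CFC.abs_eq_cfc_norm Δ]
    nth_rw 2 [← cfc_id' ℝ Δ]
    rw [← cfc_mul sgn _ Δ (hcont _) (hcont _)]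
    refine cfc_congr fun x _ => ?_
    by_cases hx : 0 ≤ x
    · simp [sgn, hx, abs_of_nonneg hx]
    · simp [sgn, hx, abs_of_neg (not_le.mp hx)]
  refine ⟨cfc sgn Δ, IsSelfAdjoint.cfc, ?_, by rw [traceNorm, habs]⟩
  rw [← cfc_mul sgn sgn Δ (hcont _) (hcont _), ← cfc_one ℝ Δ]
  exact cfc_congr fun x _ => by by_cases hx : 0 ≤ x <;> simp [sgn, hx]

lemma sq_norm_trace_conjTranspose_mul_le (X Y : Matrix ι ι ℂ) :
    ‖(Xᴴ * Y).trace‖ ^ 2 ≤ (Xᴴ * X).trace.re * (Yᴴ * Y).trace.re := by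
  classical
  let _ := Matrix.toMatrixSeminormedAddCommGroup (1 : Matrix ι ι ℂ) Matrix.PosSemidef.one
  let _ := Matrix.toMatrixInnerProductSpace (1 : Matrix ι ι ℂ) Matrix.PosSemidef.one
  have hinner (A B : Matrix ι ι ℂ) : inner ℂ A B = (Aᴴ * B).trace := by
    rw [Matrix.trace_mul_comm]
    show (B * 1 * Aᴴ).trace = _
    rw [Matrix.mul_one]
  have hcs := inner_mul_inner_self_le (𝕜 := ℂ) X Y
  rw [norm_inner_symm Y X, ← sq] at hcs
  simpa only [hinner, RCLike.re_to_complex] using hcs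

lemma re_trace_conjTranspose_mul_self_le [DecidableEq ι] {M : Matrix ι ι ℂ} {c : ℝ}
    (hM : (c • 1 - Mᴴ * M).PosSemidef) (E : Matrix ι ι ℂ) :
    ((M * E)ᴴ * (M * E)).trace.re ≤ c * (Eᴴ * E).trace.re := by
  have h := (Complex.nonneg_iff.mp (hM.conjTranspose_mul_mul_same E).trace_nonneg).1
  have hsplit : Eᴴ * (c • 1 - Mᴴ * M) * E = c • (Eᴴ * E) - (M * E)ᴴ * (M * E) := by
    simp only [Matrix.mul_sub, Matrix.sub_mul, Matrix.mul_smul, Matrix.smul_mul, Matrix.mul_one,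
      Matrix.conjTranspose_mul, Matrix.mul_assoc]
  rw [hsplit, Matrix.trace_sub, Matrix.trace_smul, Complex.sub_re, Complex.real_smul,
    Complex.re_ofReal_mul] at h
  linarith

lemma trace_conjTranspose_mul_mul_eq (X Y C : Matrix ι ι ℂ) :
    ((X * C)ᴴ * (Y * C)).trace = (Xᴴ * Y * (C * Cᴴ)).trace := by
  rw [Matrix.conjTranspose_mul, Matrix.mul_assoc, Matrix.trace_mul_comm]
  simp only [Matrix.mul_assoc]

end

section PartialTrace
variable {κ μ : Type*}

lemma trace_kronecker_one_mul [Fintype κ] [Fintype μ] [DecidableEq μ] (A : Matrix κ κ ℂ)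
    (ρ : Matrix (κ × μ) (κ × μ) ℂ) :
    ((A ⊗ₖ (1 : Matrix μ μ ℂ)) * ρ).trace = (A * traceRight ρ).trace := by
  simp only [Matrix.trace, Matrix.mul_apply, traceRight, Matrix.one_apply,
    Fintype.sum_prod_type, Matrix.diag_apply, Matrix.kroneckerMap_apply, Matrix.of_apply,
    Finset.mul_sum, mul_ite, mul_one, mul_zero, ite_mul, zero_mul, Finset.sum_ite_eq,
    Finset.mem_univ, if_true]
  exact Finset.sum_congr rfl fun _ _ => Finset.sum_comm

lemma trace_one_kronecker_mul [Fintype κ] [Fintype μ] [DecidableEq κ] (A : Matrix μ μ ℂ)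
    (ρ : Matrix (κ × μ) (κ × μ) ℂ) :
    (((1 : Matrix κ κ ℂ) ⊗ₖ A) * ρ).trace = (A * traceLeft ρ).trace := by
  simp only [Matrix.trace, Matrix.diag_apply, Matrix.mul_apply, Matrix.kroneckerMap_apply,
    Matrix.one_apply, ite_mul, one_mul, zero_mul, Fintype.sum_prod_type, Finset.sum_ite_irrel,
    Finset.sum_const_zero, Finset.sum_ite_eq, Finset.mem_univ, if_true, traceLeft,
    Matrix.of_apply, Finset.mul_sum]
  rw [Finset.sum_comm]
  exact Finset.sum_congr rfl fun _ _ => Finset.sum_comm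

lemma isHermitian_traceRight [Fintype μ] {ρ : Matrix (κ × μ) (κ × μ) ℂ}
    (h : ρ.IsHermitian) : (traceRight ρ).IsHermitian := by
  ext i j
  simp only [Matrix.conjTranspose_apply, traceRight, Matrix.of_apply, star_sum]
  exact Finset.sum_congr rfl fun k _ => h.apply _ _

lemma isHermitian_traceLeft [Fintype κ] {ρ : Matrix (κ × μ) (κ × μ) ℂ}
    (h : ρ.IsHermitian) : (traceLeft ρ).IsHermitian := by
  ext i j
  simp only [Matrix.conjTranspose_apply, traceLeft, Matrix.of_apply, star_sum]
  exact Finset.sum_congr rfl fun k _ => h.apply _ _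

end PartialTrace

section KroneckerDiff
variable {κ : Type*} [DecidableEq κ]

def kroneckerDiff (U : Matrix κ κ ℂ) : Matrix (κ × κ) (κ × κ) ℂ :=
  U ⊗ₖ 1 - 1 ⊗ₖ U

lemma trace_kroneckerDiff_mul [Fintype κ] (U : Matrix κ κ ℂ)
    (ρ : Matrix (κ × κ) (κ × κ) ℂ) :
    (kroneckerDiff U * ρ).trace = (U * (traceRight ρ - traceLeft ρ)).trace := by
  rw [kroneckerDiff, Matrix.sub_mul, Matrix.trace_sub, trace_kronecker_one_mul,
    trace_one_kronecker_mul, Matrix.mul_sub, Matrix.trace_sub]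

lemma isHermitian_kroneckerDiff {U : Matrix κ κ ℂ} (hU : U.IsHermitian) :
    (kroneckerDiff U).IsHermitian := by
  rw [Matrix.IsHermitian, kroneckerDiff, Matrix.conjTranspose_sub,
    Matrix.conjTranspose_kronecker, Matrix.conjTranspose_kronecker, Matrix.conjTranspose_one,
    hU.eq]

lemma posSemidef_four_sub_kroneckerDiff_sq [Fintype κ] {U : Matrix κ κ ℂ} (hU : U.IsHermitian)
    (hUU : U * U = 1) :
    ((4 : ℝ) • 1 - (kroneckerDiff U)ᴴ * kroneckerDiff U).PosSemidef := by
  have hV : (U ⊗ₖ U)ᴴ = U ⊗ₖ U := by rw [Matrix.conjTranspose_kronecker, hU.eq]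
  have hsq : (4 : ℝ) • 1 - (kroneckerDiff U)ᴴ * kroneckerDiff U
      = (1 + U ⊗ₖ U)ᴴ * (1 + U ⊗ₖ U) := by
    rw [(isHermitian_kroneckerDiff hU).eq, Matrix.conjTranspose_add, Matrix.conjTranspose_one,
      hV, kroneckerDiff]
    simp only [Matrix.sub_mul, Matrix.mul_sub, Matrix.add_mul, Matrix.mul_add,
      ← Matrix.mul_kronecker_mul, hUU, Matrix.one_mul, Matrix.mul_one, Matrix.one_kronecker_one]
    module
  rw [hsq]
  exact Matrix.posSemidef_conjTranspose_mul_self _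

end KroneckerDiff

section Swap
variable {d : ℕ}

lemma swap_apply (p q : Fin d × Fin d) : swap d p q = if p.swap = q then 1 else 0 := by
  simp only [swap, Matrix.of_apply, Prod.ext_iff, Prod.fst_swap, Prod.snd_swap, eq_comm,
    and_comm]

lemma swap_mul_apply (X : Matrix (Fin d × Fin d) (Fin d × Fin d) ℂ) (p q : Fin d × Fin d) :
    (swap d * X) p q = X p.swap q := by
  simp [Matrix.mul_apply, swap_apply]

lemma mul_swap_apply (X : Matrix (Fin d × Fin d) (Fin d × Fin d) ℂ) (p q : Fin d × Fin d) :
    (X * swap d) p q = X p q.swap := by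
  simp [Matrix.mul_apply, swap_apply, Prod.swap_eq_iff_eq_swap]

lemma isHermitian_swap : (swap d).IsHermitian := by
  ext p q
  simp only [Matrix.conjTranspose_apply, swap_apply, Prod.swap_eq_iff_eq_swap, eq_comm (a := q)]
  simp

lemma swap_mul_swap : swap d * swap d = 1 := by
  ext p q
  simp [swap_mul_apply, swap_apply, Matrix.one_apply]

lemma swap_mul_kronecker_mul_swap (A B : Matrix (Fin d) (Fin d) ℂ) :
    swap d * (A ⊗ₖ B) * swap d = B ⊗ₖ A := by
  ext p q
  simp [mul_swap_apply, swap_mul_apply, mul_comm]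

lemma swap_mul_kroneckerDiff_mul_swap (U : Matrix (Fin d) (Fin d) ℂ) :
    swap d * kroneckerDiff U * swap d = -kroneckerDiff U := by
  rw [kroneckerDiff, Matrix.mul_sub, Matrix.sub_mul, swap_mul_kronecker_mul_swap,
    swap_mul_kronecker_mul_swap, neg_sub]

lemma isHermitian_Psym : (Psym d).IsHermitian := by
  simp [Matrix.IsHermitian, Psym, Matrix.conjTranspose_smul, isHermitian_swap.eq]

lemma isHermitian_Pasym : (Pasym d).IsHermitian := by
  simp [Matrix.IsHermitian, Pasym, Matrix.conjTranspose_smul, isHermitian_swap.eq]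

lemma Psym_mul_Psym : Psym d * Psym d = Psym d := by
  have h : (1 + swap d) * (1 + swap d) = (2 : ℂ) • (1 + swap d) := by
    rw [mul_add, add_mul, add_mul, one_mul, one_mul, mul_one, swap_mul_swap]
    module
  simp only [Psym, smul_mul_assoc, mul_smul_comm, smul_smul, h]
  module

lemma Pasym_mul_Pasym : Pasym d * Pasym d = Pasym d := by
  have h : (1 - swap d) * (1 - swap d) = (2 : ℂ) • (1 - swap d) := by
    rw [mul_sub, sub_mul, sub_mul, one_mul, one_mul, mul_one, swap_mul_swap]
    module
  simp only [Pasym, smul_mul_assoc, mul_smul_comm, smul_smul, h]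
  module

lemma eq_Psym_mul_mul_Pasym_add_of_swap {M : Matrix (Fin d × Fin d) (Fin d × Fin d) ℂ}
    (hM : swap d * M * swap d = -M) :
    M = Psym d * M * Pasym d + Pasym d * M * Psym d := by
  have hexpand : Psym d * M * Pasym d + Pasym d * M * Psym d = ((2 : ℂ)⁻¹ * (2 : ℂ)⁻¹) •
      ((1 + swap d) * M * (1 - swap d) + (1 - swap d) * M * (1 + swap d)) := by
    simp only [Psym, Pasym, smul_mul_assoc, mul_smul_comm, smul_smul]
    rw [smul_add]
  have hcross : (1 + swap d) * M * (1 - swap d) + (1 - swap d) * M * (1 + swap d)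
      = M + M - (swap d * M * swap d + swap d * M * swap d) := by
    noncomm_ring
  rw [hexpand, hcross, hM]
  module

lemma re_trace_mul_eq_of_swap {M ρ : Matrix (Fin d × Fin d) (Fin d × Fin d) ℂ}
    (hM : M.IsHermitian) (hρ : ρ.IsHermitian) (hMswap : swap d * M * swap d = -M) :
    (M * ρ).trace.re = 2 * (Pasym d * M * Psym d * ρ).trace.re := by
  have hconj :
      (Psym d * M * Pasym d * ρ).trace = star (Pasym d * M * Psym d * ρ).trace := by
    rw [← Matrix.trace_conjTranspose]
    simp only [Matrix.conjTranspose_mul, hM.eq, hρ.eq, isHermitian_Psym.eq,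
      isHermitian_Pasym.eq]
    rw [Matrix.trace_mul_comm]
    simp only [Matrix.mul_assoc]
  conv_lhs => rw [eq_Psym_mul_mul_Pasym_add_of_swap hMswap]
  rw [Matrix.add_mul, Matrix.trace_add, hconj, Complex.add_re, Complex.star_def, Complex.conj_re]
  ring

lemma sq_norm_trace_Pasym_mul_mul_Psym_mul_le
    {M ρ : Matrix (Fin d × Fin d) (Fin d × Fin d) ℂ} {c : ℝ}
    (hM : (c • 1 - Mᴴ * M).PosSemidef) (hρ : ρ.PosSemidef) :
    ‖(Pasym d * M * Psym d * ρ).trace‖ ^ 2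
      ≤ c * ((Pasym d * ρ).trace.re * (Psym d * ρ).trace.re) := by
  obtain ⟨C, rfl⟩ := CStarAlgebra.nonneg_iff_eq_mul_star_self.mp hρ.nonneg
  rw [Matrix.star_eq_conjTranspose]
  have hT : (Pasym d * M * Psym d * (C * Cᴴ)).trace
      = ((Pasym d * C)ᴴ * (M * Psym d * C)).trace := by
    rw [trace_conjTranspose_mul_mul_eq, isHermitian_Pasym.eq, Matrix.mul_assoc (Pasym d)]
  have hA : (Pasym d * (C * Cᴴ)).trace = ((Pasym d * C)ᴴ * (Pasym d * C)).trace := by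
    rw [trace_conjTranspose_mul_mul_eq, isHermitian_Pasym.eq, Pasym_mul_Pasym]
  have hS : (Psym d * (C * Cᴴ)).trace = ((Psym d * C)ᴴ * (Psym d * C)).trace := by
    rw [trace_conjTranspose_mul_mul_eq, isHermitian_Psym.eq, Psym_mul_Psym]
  have hMS := re_trace_conjTranspose_mul_self_le hM (Psym d * C)
  have hA0 : 0 ≤ ((Pasym d * C)ᴴ * (Pasym d * C)).trace.re :=
    (Complex.nonneg_iff.mp (Matrix.posSemidef_conjTranspose_mul_self _).trace_nonneg).1
  rw [hT, hA, hS, Matrix.mul_assoc M, mul_left_comm c]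
  exact (sq_norm_trace_conjTranspose_mul_le _ _).trans (mul_le_mul_of_nonneg_left hMS hA0)

end Swap

theorem stmt4 (d : ℕ) (ρ : Matrix (Fin d × Fin d) (Fin d × Fin d) ℂ)
    (hρ : IsDensity ρ) :
    traceDist (traceRight ρ) (traceLeft ρ)
      ≤ 2 * Real.sqrt (((Pasym d * ρ).trace).re * ((Psym d * ρ).trace).re) := by
  obtain ⟨hρ, -⟩ := hρ
  obtain ⟨U, hU, hUU, hnorm⟩ := exists_traceNorm_eq_re_trace_mul
    ((isHermitian_traceRight hρ.1).sub (isHermitian_traceLeft hρ.1))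
  set T := (Pasym d * kroneckerDiff U * Psym d * ρ).trace
  have hT := sq_norm_trace_Pasym_mul_mul_Psym_mul_le
    (posSemidef_four_sub_kroneckerDiff_sq hU hUU) hρ
  calc traceDist (traceRight ρ) (traceLeft ρ) = T.re := by
        rw [traceDist, hnorm, ← trace_kroneckerDiff_mul, re_trace_mul_eq_of_swap
          (isHermitian_kroneckerDiff hU) hρ.1 (swap_mul_kroneckerDiff_mul_swap U)]
        ring
    _ ≤ ‖T‖ := Complex.re_le_norm T
    _ ≤ Real.sqrt (4 * ((Pasym d * ρ).trace.re * (Psym d * ρ).trace.re)) :=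
        Real.le_sqrt_of_sq_le hT
    _ = _ := by
        rw [Real.sqrt_mul zero_le_four, show (4 : ℝ) = 2 ^ 2 by norm_num,
          Real.sqrt_sq zero_le_two]
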